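/- arXiv:1105.1880 — 6 statements merged into one kernel-verified Lean document; each statement's English description precedes it below -/
import Mathlib

section
/- Let E, F be Banach spaces, U ⊆ E open, g : U → F a C¹ map, and y₀ ∈ F a regular value of g (i.e., at every point x of S = g⁻¹(y₀), the differential g'(x) is surjective and its kernel splits E). Let f : U → ℝ be C¹. If x ∈ S is a local extremum of the restriction f|_S, then the kernel of g'(x) is contained in the kernel of f'(x) (i.e., f'(x)h = 0 for every h with g'(x)h = 0). -/
/-!
By the Lagrange multiplier theorem (the graph map `z ↦ (g z, f z)` would otherwise be open at
`x` by Lyusternik–Graves), `(g'(x), f'(x)) : E → F × ℝ` is not surjective at a constrained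
extremum. Since `g'(x)` is onto, a vector `h ∈ ker g'(x)` with `f'(x) h ≠ 0` would make this pair
onto: it adjusts the `ℝ`-component freely without changing the `F`-component.
-/

open Topology

theorem LinearMap.ker_le_ker_of_range_prod_ne_top {K M N : Type*} [Field K]
    [AddCommGroup M] [Module K M] [AddCommGroup N] [Module K N]
    {g : M →ₗ[K] N} {φ : M →ₗ[K] K} (hg : Function.Surjective g)
    (hrange : range (g.prod φ) ≠ ⊤) : ker g ≤ ker φ := by
  intro v hv
  rw [mem_ker] at hv ⊢
  by_contra hφv
  apply hrange
  rw [range_eq_top]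
  rintro ⟨y, t⟩
  obtain ⟨z, rfl⟩ := hg y
  refine ⟨z + ((t - φ z) / φ v) • v, Prod.ext ?_ ?_⟩
  · simp [hv]
  · simp [field, hφv]

theorem IsLocalExtrOn.of_inter_mem_nhds {α β : Type*} [TopologicalSpace α] [Preorder β]
    {f : α → β} {s t : Set α} {a : α} (hf : IsLocalExtrOn f (t ∩ s) a) (ht : t ∈ 𝓝 a) :
    IsLocalExtrOn f s a := by
  rw [Set.inter_comm] at hf
  exact hf.filter_mono (nhdsWithin_restrict' s ht).le

/-- If `y₀` is a regular value of a `C¹` map `g : U → F` between Banach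
spaces and `x ∈ S = g⁻¹(y₀)` is a local extremum of `f|_S` for a `C¹` functional `f`,
then `ker g'(x) ⊆ ker f'(x)`. -/
theorem critical_point_kernel_inclusion
    {E F : Type*} [NormedAddCommGroup E] [NormedSpace ℝ E] [CompleteSpace E]
    [NormedAddCommGroup F] [NormedSpace ℝ F] [CompleteSpace F]
    {U : Set E} (hU : IsOpen U) {g : E → F} {f : E → ℝ} {y₀ : F}
    (hg : ContDiffOn ℝ 1 g U) (hf : ContDiffOn ℝ 1 f U)
    (hreg : ∀ z ∈ U, g z = y₀ →
      Function.Surjective (fderiv ℝ g z) ∧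
      (LinearMap.ker (fderiv ℝ g z : E →ₗ[ℝ] F)).ClosedComplemented)
    {x : E} (hxU : x ∈ U) (hxS : g x = y₀)
    (hext : IsLocalExtrOn f (U ∩ g ⁻¹' {y₀}) x) :
    ∀ h : E, fderiv ℝ g x h = 0 → fderiv ℝ f x h = 0 := by
  have hUx : U ∈ 𝓝 x := hU.mem_nhds hxU
  have hlevel : IsLocalExtrOn f {z | g z = g x} x := by
    rw [hxS]
    exact hext.of_inter_mem_nhds hUx
  have hrange := hlevel.range_ne_top_of_hasStrictFDerivAt
    ((hg.contDiffAt hUx).hasStrictFDerivAt one_ne_zero)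
    ((hf.contDiffAt hUx).hasStrictFDerivAt one_ne_zero)
  rw [ContinuousLinearMap.coe_prod] at hrange
  intro h hgh
  exact LinearMap.ker_le_ker_of_range_prod_ne_top (hreg x hxU hxS).1 hrange hgh
end

section
/- Let A ∈ B(E,F) be a double split operator between Banach spaces, and let A⁺₀ be a generalized inverse of A with associated decompositions E = N(A) ⊕ R₀⁺ and F = R(A) ⊕ N₀⁺, where R₀⁺ = R(A⁺₀) and N₀⁺ = N(A⁺₀). For bounded linear operators α : R₀⁺ → N(A) and β : N₀⁺ → R(A), define M(α,β) = (I_E + α)∘A⁺₀∘(I_F − β∘P), where P is the projection of F onto N₀⁺ along R(A). Then M(α,β) is a generalized inverse of A. -/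
/-!
Writing `M(α, β) = L ∘ A⁺₀ ∘ T` with `L = I + α` and `T = I − β P`, the only properties of `L` and
`T` that matter are `A L = A` (as `α` maps into `N(A)`) and `T A = A` (as `P` kills `R(A)`).
Any such two-sided modification `L B T` of a generalized inverse `B` is again one:
`A (L B T) A = (A L) B (T A) = A B A` and `(L B T) A (L B T) = L B (T A) (L B T) = L (B A B) T`.
-/

namespace ContinuousLinearMap

section Semiring

variable {R : Type*} [Semiring R] {E F : Type*}
  [TopologicalSpace E] [AddCommMonoid E] [Module R E]
  [TopologicalSpace F] [AddCommMonoid F] [Module R F]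

def IsGeneralizedInverse (A : E →L[R] F) (B : F →L[R] E) : Prop :=
  A ∘L B ∘L A = A ∧ B ∘L A ∘L B = B

theorem IsGeneralizedInverse.comp_comp {A : E →L[R] F} {B : F →L[R] E}
    (hB : IsGeneralizedInverse A B) {L : E →L[R] E} {T : F →L[R] F}
    (hL : A ∘L L = A) (hT : T ∘L A = A) :
    IsGeneralizedInverse A (L ∘L B ∘L T) := by
  constructor
  · calc A ∘L (L ∘L B ∘L T) ∘L A = (A ∘L L) ∘L B ∘L (T ∘L A) := by simp only [comp_assoc]
      _ = A := by rw [hL, hT, hB.1]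
  · calc (L ∘L B ∘L T) ∘L A ∘L L ∘L B ∘L T
          = L ∘L (B ∘L (T ∘L A) ∘L L ∘L B) ∘L T := by simp only [comp_assoc]
      _ = L ∘L B ∘L T := by rw [hT, ← comp_assoc A L, hL, hB.2]

theorem comp_id_add_of_comp_eq_zero [ContinuousAdd E] [ContinuousAdd F] {A : E →L[R] F}
    {α : E →L[R] E} (hα : A ∘L α = 0) : A ∘L (ContinuousLinearMap.id R E + α) = A := by
  rw [comp_add, comp_id, hα, add_zero]

end Semiring

section Ring

variable {R : Type*} [Ring R] {E F : Type*}
  [TopologicalSpace E] [AddCommGroup E] [Module R E]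
  [TopologicalSpace F] [AddCommGroup F] [Module R F] [IsTopologicalAddGroup F]

theorem id_sub_comp_comp_eq_zero {A : E →L[R] F} {B : F →L[R] E} (h : A ∘L B ∘L A = A) :
    (ContinuousLinearMap.id R F - A ∘L B) ∘L A = 0 := by
  rw [sub_comp, id_comp, comp_assoc, h, sub_self]

theorem id_sub_comp_comp_eq_of_comp_eq_zero {A : E →L[R] F} {P β : F →L[R] F} (hP : P ∘L A = 0) :
    (ContinuousLinearMap.id R F - β ∘L P) ∘L A = A := by
  rw [sub_comp, id_comp, comp_assoc, hP, comp_zero, sub_zero]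

end Ring

end ContinuousLinearMap

theorem M_is_generalized_inverse_general
    {E F : Type*} [NormedAddCommGroup E] [NormedSpace ℝ E]
    [NormedAddCommGroup F] [NormedSpace ℝ F]
    (A : E →L[ℝ] F) (A0 : F →L[ℝ] E)
    (h1 : A ∘L A0 ∘L A = A) (h2 : A0 ∘L A ∘L A0 = A0)
    (α : E →L[ℝ] E)
    (hα2 : A ∘L α = 0)                  -- α maps into N(A)
    (β : F →L[ℝ] F) :
    letI P : F →L[ℝ] F := ContinuousLinearMap.id ℝ F - A ∘L A0
    letI B : F →L[ℝ] E :=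
      ((ContinuousLinearMap.id ℝ E + α) ∘L A0) ∘L (ContinuousLinearMap.id ℝ F - β ∘L P)
    A ∘L B ∘L A = A ∧ B ∘L A ∘L B = B := by
  have hA0 : A.IsGeneralizedInverse A0 := ⟨h1, h2⟩
  exact hA0.comp_comp (ContinuousLinearMap.comp_id_add_of_comp_eq_zero hα2)
    (ContinuousLinearMap.id_sub_comp_comp_eq_of_comp_eq_zero
      (ContinuousLinearMap.id_sub_comp_comp_eq_zero h1))

/-- Given a double split `A` with generalized inverse `A⁺₀`, and operators
`α : R₀⁺ → N(A)`, `β : N₀⁺ → R(A)` (extended by zero to all of `E` resp. `F`), the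
operator `M(α,β) = (I_E + α) A⁺₀ (I_F − β P)` (with `P = I_F − A A⁺₀` the projection
onto `N₀⁺` along `R(A)`) is a generalized inverse of `A`. -/
theorem M_is_generalized_inverse
    {E F : Type*} [NormedAddCommGroup E] [NormedSpace ℝ E] [CompleteSpace E]
    [NormedAddCommGroup F] [NormedSpace ℝ F] [CompleteSpace F]
    (A : E →L[ℝ] F) (A0 : F →L[ℝ] E)
    (hsplit : IsClosed (LinearMap.range (A : E →ₗ[ℝ] F) : Set F) ∧
      (LinearMap.ker (A : E →ₗ[ℝ] F)).ClosedComplemented ∧ (LinearMap.range (A : E →ₗ[ℝ] F)).ClosedComplemented)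
    (h1 : A ∘L A0 ∘L A = A) (h2 : A0 ∘L A ∘L A0 = A0)
    (α : E →L[ℝ] E)
    (hα1 : α ∘L (A0 ∘L A) = α)        -- α is determined by its values on R₀⁺ = R(A⁺₀)
    (hα2 : A ∘L α = 0)                  -- α maps into N(A)
    (β : F →L[ℝ] F)
    (hβ1 : β ∘L (A ∘L A0) = 0)        -- β vanishes on R(A), i.e. lives on N₀⁺
    (hβ2 : (A ∘L A0) ∘L β = β) :       -- β maps into R(A)
    letI P : F →L[ℝ] F := ContinuousLinearMap.id ℝ F - A ∘L A0
    letI B : F →L[ℝ] E :=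
      ((ContinuousLinearMap.id ℝ E + α) ∘L A0) ∘L (ContinuousLinearMap.id ℝ F - β ∘L P)
    A ∘L B ∘L A = A ∧ B ∘L A ∘L B = B :=
  M_is_generalized_inverse_general A A0 h1 h2 α hα2 β
end

section
/- With notation as in the construction M(α,β) = (I_E + α) A⁺₀ (I_F − β P_{N₀⁺}^{R(A)}): the range of B = M(α,β) equals { e + α(e) : e ∈ R₀⁺ }, the graph of α over R₀⁺. -/
theorem LinearMap.range_comp_eq_range_of_comp_comp_eq {R M₁ M₂ M₃ : Type*} [Semiring R]
    [AddCommMonoid M₁] [AddCommMonoid M₂] [AddCommMonoid M₃]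
    [Module R M₁] [Module R M₂] [Module R M₃]
    {f : M₂ →ₗ[R] M₃} {g : M₁ →ₗ[R] M₂} {q : M₂ →ₗ[R] M₁} (h : f ∘ₗ g ∘ₗ q = f) :
    LinearMap.range (f ∘ₗ g) = LinearMap.range f := by
  refine le_antisymm (LinearMap.range_comp_le_range g f) ?_
  rintro _ ⟨y, rfl⟩
  exact ⟨q y, LinearMap.congr_fun h y⟩

theorem range_M_eq_graph_general
    {E F : Type*} [NormedAddCommGroup E] [NormedSpace ℝ E]
    [NormedAddCommGroup F] [NormedSpace ℝ F]
    (A : E →L[ℝ] F) (A0 : F →L[ℝ] E)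
    (h2 : A0 ∘L A ∘L A0 = A0)
    (α : E →L[ℝ] E)
    (β : F →L[ℝ] F) (hβ1 : β ∘L (A ∘L A0) = 0) :
    letI P : F →L[ℝ] F := ContinuousLinearMap.id ℝ F - A ∘L A0
    letI B : F →L[ℝ] E :=
      ((ContinuousLinearMap.id ℝ E + α) ∘L A0) ∘L (ContinuousLinearMap.id ℝ F - β ∘L P)
    (LinearMap.range (B : F →ₗ[ℝ] E) : Set E) = {x : E | ∃ e ∈ LinearMap.range (A0 : F →ₗ[ℝ] E), x = e + α e} := by
  set P : F →L[ℝ] F := ContinuousLinearMap.id ℝ F - A ∘L A0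
  set C : F →L[ℝ] F := ContinuousLinearMap.id ℝ F - β ∘L P
  -- `β` kills `R(A)`, so `C = I - β`, and `A A0` is a right inverse of `A0 C` on `R(A0)`.
  have hC : C = ContinuousLinearMap.id ℝ F - β := by
    simp only [C, P, ContinuousLinearMap.comp_sub, ContinuousLinearMap.comp_id, hβ1, sub_zero]
  have hsection : A0 ∘L C ∘L (A ∘L A0) = A0 := by
    rw [hC, ContinuousLinearMap.sub_comp, ContinuousLinearMap.comp_sub, hβ1,
      ContinuousLinearMap.comp_zero, sub_zero, ContinuousLinearMap.id_comp, h2]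
  have hrange : LinearMap.range ((A0 : F →ₗ[ℝ] E) ∘ₗ (C : F →ₗ[ℝ] F)) =
      LinearMap.range (A0 : F →ₗ[ℝ] E) :=
    LinearMap.range_comp_eq_range_of_comp_comp_eq (q := (A ∘L A0 : F →L[ℝ] F))
      (congrArg ContinuousLinearMap.toLinearMap hsection)
  change (LinearMap.range (((ContinuousLinearMap.id ℝ E + α : E →L[ℝ] E) : E →ₗ[ℝ] E) ∘ₗ
    ((A0 : F →ₗ[ℝ] E) ∘ₗ (C : F →ₗ[ℝ] F))) : Set E) = _
  rw [LinearMap.range_comp, hrange]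
  ext x
  simp [eq_comm]

/-- With `B = M(α,β) = (I_E + α) A⁺₀ (I_F − β P_{N₀⁺}^{R(A)})`, the range of
`B` is the graph of `α` over `R₀⁺ = R(A⁺₀)`, i.e. `R(B) = { e + α e : e ∈ R₀⁺ }`. -/
theorem range_M_eq_graph
    {E F : Type*} [NormedAddCommGroup E] [NormedSpace ℝ E] [CompleteSpace E]
    [NormedAddCommGroup F] [NormedSpace ℝ F] [CompleteSpace F]
    (A : E →L[ℝ] F) (A0 : F →L[ℝ] E)
    (hsplit : IsClosed (LinearMap.range (A : E →ₗ[ℝ] F) : Set F) ∧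
      (LinearMap.ker (A : E →ₗ[ℝ] F)).ClosedComplemented ∧ (LinearMap.range (A : E →ₗ[ℝ] F)).ClosedComplemented)
    (h1 : A ∘L A0 ∘L A = A) (h2 : A0 ∘L A ∘L A0 = A0)
    (α : E →L[ℝ] E) (hα1 : α ∘L (A0 ∘L A) = α) (hα2 : A ∘L α = 0)
    (β : F →L[ℝ] F) (hβ1 : β ∘L (A ∘L A0) = 0) (hβ2 : (A ∘L A0) ∘L β = β) :
    letI P : F →L[ℝ] F := ContinuousLinearMap.id ℝ F - A ∘L A0
    letI B : F →L[ℝ] E :=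
      ((ContinuousLinearMap.id ℝ E + α) ∘L A0) ∘L (ContinuousLinearMap.id ℝ F - β ∘L P)
    (LinearMap.range (B : F →ₗ[ℝ] E) : Set E) = {x : E | ∃ e ∈ LinearMap.range (A0 : F →ₗ[ℝ] E), x = e + α e} :=
  range_M_eq_graph_general A A0 h2 α β hβ1
end

section
/- With notation as in the construction M(α,β) = (I_E + α) A⁺₀ (I_F − β P_{N₀⁺}^{R(A)}): the null space of B = M(α,β) equals { d + β(d) : d ∈ N₀⁺ }, the graph of β over N₀⁺. -/
/-!
Since `β A A₀ = 0`, the second factor of `B` is just `1 - β`, and `β² = β (A A₀) β = 0`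
makes `1 - β` invertible with inverse `1 + β`. Applying `A₀ A` to `(1 + α) A₀ y = 0` kills
the `α`-term (`A α = 0`) and leaves `A₀ y = 0`, so `ker ((1 + α) A₀) = ker A₀`. Hence
`ker B = (1 - β)⁻¹ (ker A₀) = (1 + β) (ker A₀)`.
-/

section

variable {R M N : Type*} [Ring R] [AddCommGroup M] [Module R M] [AddCommGroup N] [Module R N]

theorem LinearMap.comp_self_eq_zero_of_comp_eq_zero {β Q : M →ₗ[R] M} (hβQ : β ∘ₗ Q = 0)
    (hQβ : Q ∘ₗ β = β) : β ∘ₗ β = 0 :=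
  calc β ∘ₗ β = (β ∘ₗ Q) ∘ₗ β := by rw [LinearMap.comp_assoc, hQβ]
    _ = 0 := by rw [hβQ, LinearMap.zero_comp]

theorem Submodule.comap_id_sub_eq_map_id_add {β : M →ₗ[R] M} (hβ : β ∘ₗ β = 0)
    (p : Submodule R M) : p.comap (LinearMap.id - β) = p.map (LinearMap.id + β) :=
  p.comap_equiv_eq_map_symm <| .ofLinearMap (LinearMap.id - β) (LinearMap.id + β)
    (by rw [LinearMap.sub_comp, LinearMap.comp_add, LinearMap.comp_add, hβ]; simp)
    (by rw [LinearMap.add_comp, LinearMap.comp_sub, LinearMap.comp_sub, hβ]; simp)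

theorem LinearMap.ker_id_add_comp_eq_ker {A : M →ₗ[R] N} {A₀ : N →ₗ[R] M} {α : M →ₗ[R] M}
    (hA₀ : A₀ ∘ₗ A ∘ₗ A₀ = A₀) (hα : A ∘ₗ α = 0) :
    ker ((LinearMap.id + α) ∘ₗ A₀) = ker A₀ := by
  refine le_antisymm (fun y hy => ?_) (fun y hy => by simp_all)
  rw [mem_ker] at hy ⊢
  calc A₀ y = A₀ (A (A₀ y)) := (congr($hA₀ y)).symm
    _ = A₀ (A (A₀ y + α (A₀ y))) := by rw [map_add A, ← comp_apply A α, hα, zero_apply, add_zero]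
    _ = 0 := by simpa using congr(A₀ (A $hy))

theorem LinearMap.ker_id_add_comp_comp_id_sub_eq_map {A : M →ₗ[R] N} {A₀ : N →ₗ[R] M}
    {α : M →ₗ[R] M} {β : N →ₗ[R] N} (hA₀ : A₀ ∘ₗ A ∘ₗ A₀ = A₀) (hα : A ∘ₗ α = 0)
    (hβ₁ : β ∘ₗ (A ∘ₗ A₀) = 0) (hβ₂ : (A ∘ₗ A₀) ∘ₗ β = β) :
    ker (((id + α) ∘ₗ A₀) ∘ₗ (id - β ∘ₗ (id - A ∘ₗ A₀))) = (ker A₀).map (id + β) := by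
  have hβP : β ∘ₗ (id - A ∘ₗ A₀) = β := by rw [comp_sub, hβ₁, sub_zero, comp_id]
  rw [hβP, ker_comp, ker_id_add_comp_eq_ker hA₀ hα]
  exact Submodule.comap_id_sub_eq_map_id_add (comp_self_eq_zero_of_comp_eq_zero hβ₁ hβ₂) _

end

theorem ker_M_eq_graph_general
    {E F : Type*} [NormedAddCommGroup E] [NormedSpace ℝ E]
    [NormedAddCommGroup F] [NormedSpace ℝ F]
    (A : E →L[ℝ] F) (A0 : F →L[ℝ] E)
    (h2 : A0 ∘L A ∘L A0 = A0)
    (α : E →L[ℝ] E) (hα2 : A ∘L α = 0)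
    (β : F →L[ℝ] F) (hβ1 : β ∘L (A ∘L A0) = 0) (hβ2 : (A ∘L A0) ∘L β = β) :
    letI P : F →L[ℝ] F := ContinuousLinearMap.id ℝ F - A ∘L A0
    letI B : F →L[ℝ] E :=
      ((ContinuousLinearMap.id ℝ E + α) ∘L A0) ∘L (ContinuousLinearMap.id ℝ F - β ∘L P)
    (LinearMap.ker (B : F →ₗ[ℝ] E) : Set F) = {y : F | ∃ d ∈ LinearMap.ker (A0 : F →ₗ[ℝ] E), y = d + β d} := by
  have hker := LinearMap.ker_id_add_comp_comp_id_sub_eq_map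
    (congrArg ContinuousLinearMap.toLinearMap h2) (congrArg ContinuousLinearMap.toLinearMap hα2)
    (congrArg ContinuousLinearMap.toLinearMap hβ1) (congrArg ContinuousLinearMap.toLinearMap hβ2)
  refine (congrArg SetLike.coe hker).trans ?_
  ext y
  simp [eq_comm]

/-- With `B = M(α,β) = (I_E + α) A⁺₀ (I_F − β P_{N₀⁺}^{R(A)})`, the null
space of `B` is the graph of `β` over `N₀⁺ = N(A⁺₀)`, i.e. `N(B) = { d + β d : d ∈ N₀⁺ }`. -/
theorem ker_M_eq_graph
    {E F : Type*} [NormedAddCommGroup E] [NormedSpace ℝ E] [CompleteSpace E]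
    [NormedAddCommGroup F] [NormedSpace ℝ F] [CompleteSpace F]
    (A : E →L[ℝ] F) (A0 : F →L[ℝ] E)
    (hsplit : IsClosed (LinearMap.range (A : E →ₗ[ℝ] F) : Set F) ∧
      (LinearMap.ker (A : E →ₗ[ℝ] F)).ClosedComplemented ∧ (LinearMap.range (A : E →ₗ[ℝ] F)).ClosedComplemented)
    (h1 : A ∘L A0 ∘L A = A) (h2 : A0 ∘L A ∘L A0 = A0)
    (α : E →L[ℝ] E) (hα1 : α ∘L (A0 ∘L A) = α) (hα2 : A ∘L α = 0)
    (β : F →L[ℝ] F) (hβ1 : β ∘L (A ∘L A0) = 0) (hβ2 : (A ∘L A0) ∘L β = β) :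
    letI P : F →L[ℝ] F := ContinuousLinearMap.id ℝ F - A ∘L A0
    letI B : F →L[ℝ] E :=
      ((ContinuousLinearMap.id ℝ E + α) ∘L A0) ∘L (ContinuousLinearMap.id ℝ F - β ∘L P)
    (LinearMap.ker (B : F →ₗ[ℝ] E) : Set F) = {y : F | ∃ d ∈ LinearMap.ker (A0 : F →ₗ[ℝ] E), y = d + β d} :=
  ker_M_eq_graph_general A A0 h2 α hα2 β hβ1 hβ2
end

section
/- Let A ∈ B(E,F) be double split with fixed generalized inverse A⁺₀, R₀⁺ = R(A⁺₀), N₀⁺ = N(A⁺₀). Then the map M : B(R₀⁺, N(A)) × B(N₀⁺, R(A)) → GI(A) defined by M(α,β) = (I_E + α) A⁺₀ (I_F − β P_{N₀⁺}^{R(A)}) is a bijection onto the set GI(A) of all generalized inverses of A. -/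
/-!
The map `M` has the explicit inverse `B ↦ (B A - A₀ A, A A₀ - A B)`. Both composites reduce to the
identity by pure operator algebra: `I - A A₀` annihilates `R(A)`, so `M(α, β) A = (I + α) A₀ A`
and `A M(α, β) = A A₀ (I - β (I - A A₀))`, from which `α` and `β` are read off again.
-/

namespace ContinuousLinearMap

variable {R E F : Type*} [Ring R]
  [TopologicalSpace E] [AddCommGroup E] [Module R E] [IsTopologicalAddGroup E]
  [TopologicalSpace F] [AddCommGroup F] [Module R F] [IsTopologicalAddGroup F]

def IsGenInverse (A : E →L[R] F) (B : F →L[R] E) : Prop :=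
  A ∘L B ∘L A = A ∧ B ∘L A ∘L B = B

/-- Encodes `B(R₀⁺, N(A)) × B(N₀⁺, R(A))` as operators on `E` and `F`: since `A₀ A` projects onto
`R₀⁺` along `N(A)` and `A A₀` onto `R(A)` along `N₀⁺`, the conditions say that `α` vanishes on
`N(A)` and takes values in `N(A)`, and `β` vanishes on `R(A)` and takes values in `R(A)`. -/
def IsGenInvParam (A : E →L[R] F) (A0 : F →L[R] E) (p : (E →L[R] E) × (F →L[R] F)) : Prop :=
  p.1 ∘L (A0 ∘L A) = p.1 ∧ A ∘L p.1 = 0 ∧ p.2 ∘L (A ∘L A0) = 0 ∧ (A ∘L A0) ∘L p.2 = p.2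

/-- The paper's `M(α, β)`; `I - A A₀` is the projection `P_{N₀⁺}^{R(A)}`. -/
def genInvOfParam (A : E →L[R] F) (A0 : F →L[R] E) (p : (E →L[R] E) × (F →L[R] F)) :
    F →L[R] E :=
  ((ContinuousLinearMap.id R E + p.1) ∘L A0) ∘L
    (ContinuousLinearMap.id R F - p.2 ∘L (ContinuousLinearMap.id R F - A ∘L A0))

def paramOfGenInv (A : E →L[R] F) (A0 B : F →L[R] E) : (E →L[R] E) × (F →L[R] F) :=
  (B ∘L A - A0 ∘L A, A ∘L A0 - A ∘L B)

variable {A : E →L[R] F} {A0 : F →L[R] E}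

theorem isGenInverse_genInvOfParam (h1 : A ∘L A0 ∘L A = A) (h2 : A0 ∘L A ∘L A0 = A0)
    {p : (E →L[R] E) × (F →L[R] F)} (hα : A ∘L p.1 = 0) (hβ : p.2 ∘L (A ∘L A0) = 0) :
    IsGenInverse A (genInvOfParam A A0 p) := by
  have h1' : ∀ x, A (A0 (A x)) = A x := DFunLike.congr_fun h1
  have h2' : ∀ y, A0 (A (A0 y)) = A0 y := DFunLike.congr_fun h2
  have hα' : ∀ x, A (p.1 x) = 0 := DFunLike.congr_fun hα
  have hβ' : ∀ y, p.2 (A (A0 y)) = 0 := DFunLike.congr_fun hβ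
  constructor <;> ext <;> simp [genInvOfParam, h1', h2', hα', hβ']

theorem isGenInvParam_paramOfGenInv (h1 : A ∘L A0 ∘L A = A) {B : F →L[R] E}
    (hB : A ∘L B ∘L A = A) : IsGenInvParam A A0 (paramOfGenInv A A0 B) := by
  have h1' : ∀ x, A (A0 (A x)) = A x := DFunLike.congr_fun h1
  have hB' : ∀ x, A (B (A x)) = A x := DFunLike.congr_fun hB
  refine ⟨?_, ?_, ?_, ?_⟩ <;> ext <;> simp [paramOfGenInv, h1', hB']

theorem paramOfGenInv_genInvOfParam (h1 : A ∘L A0 ∘L A = A)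
    {p : (E →L[R] E) × (F →L[R] F)} (hp : IsGenInvParam A A0 p) :
    paramOfGenInv A A0 (genInvOfParam A A0 p) = p := by
  obtain ⟨hα₁, hα₂, hβ₁, hβ₂⟩ := hp
  have h1' : ∀ x, A (A0 (A x)) = A x := DFunLike.congr_fun h1
  have hα₁' : ∀ x, p.1 (A0 (A x)) = p.1 x := DFunLike.congr_fun hα₁
  have hα₂' : ∀ x, A (p.1 x) = 0 := DFunLike.congr_fun hα₂
  have hβ₁' : ∀ y, p.2 (A (A0 y)) = 0 := DFunLike.congr_fun hβ₁
  have hβ₂' : ∀ y, A (A0 (p.2 y)) = p.2 y := DFunLike.congr_fun hβ₂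
  ext <;> simp [paramOfGenInv, genInvOfParam, h1', hα₁', hα₂', hβ₁', hβ₂']

theorem genInvOfParam_paramOfGenInv (h1 : A ∘L A0 ∘L A = A) (h2 : A0 ∘L A ∘L A0 = A0)
    {B : F →L[R] E} (hB : IsGenInverse A B) : genInvOfParam A A0 (paramOfGenInv A A0 B) = B := by
  have h1' : ∀ x, A (A0 (A x)) = A x := DFunLike.congr_fun h1
  have h2' : ∀ y, A0 (A (A0 y)) = A0 y := DFunLike.congr_fun h2
  have hB₁ : ∀ x, A (B (A x)) = A x := DFunLike.congr_fun hB.1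
  have hB₂ : ∀ y, B (A (B y)) = B y := DFunLike.congr_fun hB.2
  ext
  simp [paramOfGenInv, genInvOfParam, h1', h2', hB₁, hB₂]

end ContinuousLinearMap

open ContinuousLinearMap

theorem M_bijection_onto_GI_general
    {E F : Type*} [NormedAddCommGroup E] [NormedSpace ℝ E]
    [NormedAddCommGroup F] [NormedSpace ℝ F]
    (A : E →L[ℝ] F) (A0 : F →L[ℝ] E)
    (h1 : A ∘L A0 ∘L A = A) (h2 : A0 ∘L A ∘L A0 = A0) :
    Set.BijOn
      (fun p : (E →L[ℝ] E) × (F →L[ℝ] F) =>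
        ((ContinuousLinearMap.id ℝ E + p.1) ∘L A0) ∘L
          (ContinuousLinearMap.id ℝ F - p.2 ∘L (ContinuousLinearMap.id ℝ F - A ∘L A0)))
      {p : (E →L[ℝ] E) × (F →L[ℝ] F) |
        p.1 ∘L (A0 ∘L A) = p.1 ∧ A ∘L p.1 = 0 ∧
        p.2 ∘L (A ∘L A0) = 0 ∧ (A ∘L A0) ∘L p.2 = p.2}
      {B : F →L[ℝ] E | A ∘L B ∘L A = A ∧ B ∘L A ∘L B = B} := by
  have hinv : Set.InvOn (paramOfGenInv A A0) (genInvOfParam A A0)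
      {p | IsGenInvParam A A0 p} {B | IsGenInverse A B} :=
    ⟨fun _ hp => paramOfGenInv_genInvOfParam h1 hp,
      fun _ hB => genInvOfParam_paramOfGenInv h1 h2 hB⟩
  exact hinv.bijOn (fun _ hp => isGenInverse_genInvOfParam h1 h2 hp.2.1 hp.2.2.1)
    (fun _ hB => isGenInvParam_paramOfGenInv h1 hB.1)

/-- With a fixed generalized inverse `A⁺₀` of the double split operator `A`,
the map `M(α,β) = (I_E + α) A⁺₀ (I_F − β P_{N₀⁺}^{R(A)})` is a bijection from
`B(R₀⁺, N(A)) × B(N₀⁺, R(A))` (realized as the pairs of operators on `E` resp. `F`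
supported on `R₀⁺` resp. `N₀⁺` with values in `N(A)` resp. `R(A)`) onto the set `GI(A)`
of all generalized inverses of `A`. -/
theorem M_bijection_onto_GI
    {E F : Type*} [NormedAddCommGroup E] [NormedSpace ℝ E] [CompleteSpace E]
    [NormedAddCommGroup F] [NormedSpace ℝ F] [CompleteSpace F]
    (A : E →L[ℝ] F) (A0 : F →L[ℝ] E)
    (hsplit : IsClosed (LinearMap.range (A : E →ₗ[ℝ] F) : Set F) ∧
      (LinearMap.ker (A : E →ₗ[ℝ] F)).ClosedComplemented ∧ (LinearMap.range (A : E →ₗ[ℝ] F)).ClosedComplemented)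
    (h1 : A ∘L A0 ∘L A = A) (h2 : A0 ∘L A ∘L A0 = A0) :
    Set.BijOn
      (fun p : (E →L[ℝ] E) × (F →L[ℝ] F) =>
        ((ContinuousLinearMap.id ℝ E + p.1) ∘L A0) ∘L
          (ContinuousLinearMap.id ℝ F - p.2 ∘L (ContinuousLinearMap.id ℝ F - A ∘L A0)))
      {p : (E →L[ℝ] E) × (F →L[ℝ] F) |
        p.1 ∘L (A0 ∘L A) = p.1 ∧ A ∘L p.1 = 0 ∧
        p.2 ∘L (A ∘L A0) = 0 ∧ (A ∘L A0) ∘L p.2 = p.2}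
      {B : F →L[ℝ] E | A ∘L B ∘L A = A ∧ B ∘L A ∘L B = B} :=
  M_bijection_onto_GI_general A A0 h1 h2
end

section
/- Let A ∈ B(E,F) be double split and B a generalized inverse of A with the decompositions E = N(A) ⊕ R(B) and F = R(A) ⊕ N(B). Fix another generalized inverse A⁺₀ with R₀⁺ = R(A⁺₀), N₀⁺ = N(A⁺₀). Then, setting α = P_{N(A)}^{R₀⁺} ∘ P_{R(B)}^{N(A)} restricted to R₀⁺ and β = P_{R(A)}^{N₀⁺} ∘ P_{N(B)}^{R(A)} restricted to N₀⁺, one has R(B) = { e + α(e) : e ∈ R₀⁺ } and N(B) = { d + β(d) : d ∈ N₀⁺ }. -/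
/-!
Idempotents `p`, `q` with a common kernel satisfy `p q = p` and `q p = q`, so that
`p y = q y + (1 - q) p (q y)`: `range p` is the graph of `(1 - q) p` over `range q`.
On `E` take `p = B A`, `q = A⁺₀ A` (common kernel `N(A)`, ranges `R(B)` and `R₀⁺`);
on `F` take `p = 1 - A B`, `q = 1 - A A⁺₀` (common kernel `R(A)`, ranges `N(B)` and `N₀⁺`).
-/

namespace LinearMap

variable {R M N : Type*} [Ring R] [AddCommGroup M] [Module R M] [AddCommGroup N] [Module R N]

theorem range_eq_graph_over_range_of_comp_eq {p q : M →ₗ[R] M}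
    (hpq : p ∘ₗ q = p) (hqp : q ∘ₗ p = q) :
    (range p : Set M) = {x | ∃ e ∈ range q, x = e + ((id - q) ∘ₗ p) e} := by
  have graph_apply (y : M) : q y + ((id - q) ∘ₗ p) (q y) = p y := by
    have hpq' : p (q y) = p y := congr($hpq y)
    have hqp' : q (p y) = q y := congr($hqp y)
    simp only [comp_apply, sub_apply, id_apply, hpq', hqp', add_sub_cancel]
  ext x
  constructor
  · rintro ⟨y, rfl⟩
    exact ⟨q y, ⟨y, rfl⟩, (graph_apply y).symm⟩
  · rintro ⟨_, ⟨y, rfl⟩, rfl⟩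
    exact ⟨y, (graph_apply y).symm⟩

theorem range_comp_eq_of_comp_comp_eq {A : M →ₗ[R] N} {B : N →ₗ[R] M} (h : B ∘ₗ A ∘ₗ B = B) :
    range (B ∘ₗ A) = range B :=
  le_antisymm (range_comp_le_range A B) fun _ ⟨y, hy⟩ => ⟨B y, hy ▸ congr($h y)⟩

theorem range_id_sub_comp_eq_ker_of_comp_comp_eq {A : M →ₗ[R] N} {B : N →ₗ[R] M}
    (h : B ∘ₗ A ∘ₗ B = B) : range (id - A ∘ₗ B) = ker B := by
  refine le_antisymm ?_ fun y hy => ⟨y, by simp [mem_ker.mp hy]⟩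
  rintro _ ⟨y, rfl⟩
  simp only [mem_ker, sub_apply, id_apply, comp_apply, map_sub]
  rw [sub_eq_zero]
  exact congr($h y).symm

theorem id_sub_comp_id_sub_of_comp_eq {f g : M →ₗ[R] M} (h : f ∘ₗ g = g) :
    (id - f) ∘ₗ (id - g) = id - f := by
  rw [sub_comp, comp_sub, comp_sub, id_comp, id_comp, comp_id, h, sub_sub_sub_cancel_right]

end LinearMap

open LinearMap in
theorem range_ker_of_generalized_inverse_as_graphs_general
    {E F : Type*} [NormedAddCommGroup E] [NormedSpace ℝ E]
    [NormedAddCommGroup F] [NormedSpace ℝ F]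
    (A : E →L[ℝ] F) (A0 B : F →L[ℝ] E)
    (h1 : A ∘L A0 ∘L A = A) (h2 : A0 ∘L A ∘L A0 = A0)
    (hB1 : A ∘L B ∘L A = A) (hB2 : B ∘L A ∘L B = B) :
    letI α : E →L[ℝ] E := (ContinuousLinearMap.id ℝ E - A0 ∘L A) ∘L (B ∘L A)
    letI β : F →L[ℝ] F := (A ∘L A0) ∘L (ContinuousLinearMap.id ℝ F - A ∘L B)
    (LinearMap.range (B : F →ₗ[ℝ] E) : Set E) = {x : E | ∃ e ∈ LinearMap.range (A0 : F →ₗ[ℝ] E), x = e + α e} ∧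
    (LinearMap.ker (B : F →ₗ[ℝ] E) : Set F) = {y : F | ∃ d ∈ LinearMap.ker (A0 : F →ₗ[ℝ] E), y = d + β d} := by
  have h1' : (A : E →ₗ[ℝ] F) ∘ₗ (A0 : F →ₗ[ℝ] E) ∘ₗ (A : E →ₗ[ℝ] F) = A := congr($h1)
  have h2' : (A0 : F →ₗ[ℝ] E) ∘ₗ (A : E →ₗ[ℝ] F) ∘ₗ (A0 : F →ₗ[ℝ] E) = A0 := congr($h2)
  have hB1' : (A : E →ₗ[ℝ] F) ∘ₗ (B : F →ₗ[ℝ] E) ∘ₗ (A : E →ₗ[ℝ] F) = A := congr($hB1)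
  have hB2' : (B : F →ₗ[ℝ] E) ∘ₗ (A : E →ₗ[ℝ] F) ∘ₗ (B : F →ₗ[ℝ] E) = B := congr($hB2)
  constructor
  · rw [← range_comp_eq_of_comp_comp_eq hB2', ← range_comp_eq_of_comp_comp_eq h2']
    exact range_eq_graph_over_range_of_comp_eq congr((B : F →ₗ[ℝ] E) ∘ₗ $h1')
      congr((A0 : F →ₗ[ℝ] E) ∘ₗ $hB1')
  · rw [← range_id_sub_comp_eq_ker_of_comp_comp_eq hB2', ← range_id_sub_comp_eq_ker_of_comp_comp_eq h2']
    have graph := range_eq_graph_over_range_of_comp_eq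
      (p := LinearMap.id - (A : E →ₗ[ℝ] F) ∘ₗ (B : F →ₗ[ℝ] E))
      (q := LinearMap.id - (A : E →ₗ[ℝ] F) ∘ₗ (A0 : F →ₗ[ℝ] E))
      (id_sub_comp_id_sub_of_comp_eq congr($hB1' ∘ₗ (A0 : F →ₗ[ℝ] E)))
      (id_sub_comp_id_sub_of_comp_eq congr($h1' ∘ₗ (B : F →ₗ[ℝ] E)))
    rwa [sub_sub_cancel] at graph

/-- Let `B` and `A⁺₀` be generalized inverses of the double split operator
`A`. With `α = P_{N(A)}^{R₀⁺} ∘ P_{R(B)}^{N(A)}` (on `E`: here `P_{R(B)}^{N(A)} = B A` and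
`P_{N(A)}^{R₀⁺} = I_E − A⁺₀ A`) and `β = P_{R(A)}^{N₀⁺} ∘ P_{N(B)}^{R(A)}` (on `F`: here
`P_{N(B)}^{R(A)} = I_F − A B` and `P_{R(A)}^{N₀⁺} = A A⁺₀`), one has
`R(B) = { e + α e : e ∈ R₀⁺ }` and `N(B) = { d + β d : d ∈ N₀⁺ }`. -/
theorem range_ker_of_generalized_inverse_as_graphs
    {E F : Type*} [NormedAddCommGroup E] [NormedSpace ℝ E] [CompleteSpace E]
    [NormedAddCommGroup F] [NormedSpace ℝ F] [CompleteSpace F]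
    (A : E →L[ℝ] F) (A0 B : F →L[ℝ] E)
    (hsplit : IsClosed (LinearMap.range (A : E →ₗ[ℝ] F) : Set F) ∧
      (LinearMap.ker (A : E →ₗ[ℝ] F)).ClosedComplemented ∧ (LinearMap.range (A : E →ₗ[ℝ] F)).ClosedComplemented)
    (h1 : A ∘L A0 ∘L A = A) (h2 : A0 ∘L A ∘L A0 = A0)
    (hB1 : A ∘L B ∘L A = A) (hB2 : B ∘L A ∘L B = B) :
    letI α : E →L[ℝ] E := (ContinuousLinearMap.id ℝ E - A0 ∘L A) ∘L (B ∘L A)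
    letI β : F →L[ℝ] F := (A ∘L A0) ∘L (ContinuousLinearMap.id ℝ F - A ∘L B)
    (LinearMap.range (B : F →ₗ[ℝ] E) : Set E) = {x : E | ∃ e ∈ LinearMap.range (A0 : F →ₗ[ℝ] E), x = e + α e} ∧
    (LinearMap.ker (B : F →ₗ[ℝ] E) : Set F) = {y : F | ∃ d ∈ LinearMap.ker (A0 : F →ₗ[ℝ] E), y = d + β d} :=
  range_ker_of_generalized_inverse_as_graphs_general A A0 B h1 h2 hB1 hB2
end
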